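/- Let G be a unitary on H₁ ⊗ H₂ with G|0⟩ = ∑ⱼ √aⱼ |j⟩₁|χⱼ⟩₂ and ρ = Tr₁(G|0⟩⟨0|G†) = ∑ⱼ aⱼ |χⱼ⟩⟨χⱼ|. Let S be the swap between H₂ and an ancilla H₃ ≅ H₂. Then (G† ⊗ I₃)(I₁ ⊗ S₂,₃)(G ⊗ I₃) U satisfies (⟨0|₁,₂ ⊗ I₃) (G† ⊗ I₃)(I₁ ⊗ S₂,₃)(G ⊗ I₃) (|0⟩₁,₂ ⊗ I₃) = ρ, i.e., it is an exact (1, dim(H₁⊗H₂)-qubit, 0) block-encoding of ρ. -/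
import Mathlib

open Matrix Kronecker

/-- A purification circuit together with a swap yields an exact block-encoding of the reduced
density matrix ρ. -/
theorem stmt18 {p q : ℕ} (hp : 0 < p) (hq : 0 < q)
    (G : Matrix (Fin p × Fin q) (Fin p × Fin q) ℂ)
    (hG : G * Gᴴ = 1 ∧ Gᴴ * G = 1)
    (a : Fin p → ℝ) (ha : ∀ j, 0 ≤ a j) (hsum : ∑ j, a j = 1)
    (χ : Fin p → Fin q → ℂ) (hχ : ∀ j, ∑ x, Complex.normSq (χ j x) = 1)
    (e0 : Fin p × Fin q → ℂ)
    (he0 : e0 = fun jx => if jx = ((⟨0, hp⟩ : Fin p), (⟨0, hq⟩ : Fin q)) then 1 else 0)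
    (hG0 : G *ᵥ e0 = fun jx => (Real.sqrt (a jx.1) : ℂ) * χ jx.1 jx.2)
    (ρ : Matrix (Fin q) (Fin q) ℂ)
    (hρ : ∀ x y, ρ x y = ∑ j, (a j : ℂ) * χ j x * (starRingEnd ℂ) (χ j y))
    (S : Matrix ((Fin p × Fin q) × Fin q) ((Fin p × Fin q) × Fin q) ℂ)
    (hS : ∀ j x y j' x' y', S ((j, x), y) ((j', x'), y') =
      if j = j' ∧ x = y' ∧ y = x' then 1 else 0)
    (U : Matrix ((Fin p × Fin q) × Fin q) ((Fin p × Fin q) × Fin q) ℂ)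
    (hU : U = (Gᴴ ⊗ₖ (1 : Matrix (Fin q) (Fin q) ℂ)) * S *
      (G ⊗ₖ (1 : Matrix (Fin q) (Fin q) ℂ))) :
    ∀ x y : Fin q,
      U (((⟨0, hp⟩ : Fin p), (⟨0, hq⟩ : Fin q)), x) (((⟨0, hp⟩ : Fin p), (⟨0, hq⟩ : Fin q)), y)
        = ρ x y := by
  have hcol : ∀ j x', G (j, x') (⟨0, hp⟩, ⟨0, hq⟩) = (Real.sqrt (a j) : ℂ) * χ j x' := by
    intro j x'
    have := congrFun hG0 (j, x')
    simpa [Matrix.mulVec, dotProduct, he0] using this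
  intro x y
  rw [hU, hρ]
  simp only [Matrix.mul_apply, Matrix.kroneckerMap_apply, Matrix.conjTranspose_apply,
    Matrix.one_apply, Fintype.sum_prod_type]
  simp only [hS, ite_and, hcol, _root_.map_mul, mul_ite, mul_one, mul_zero, ite_mul, zero_mul,
    Finset.sum_ite_irrel, Finset.sum_ite_eq, Finset.sum_ite_eq', Finset.mem_univ, if_true, Finset.sum_const_zero]
  refine Finset.sum_congr rfl fun j _ => ?_
  have h2 : ((Real.sqrt (a j) : ℂ)) * ((Real.sqrt (a j) : ℂ)) = (a j : ℂ) := by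
    rw [← Complex.ofReal_mul, Real.mul_self_sqrt (ha j)]
  simp only [star_mul', RCLike.star_def, Complex.conj_ofReal]
  linear_combination (χ j x * (starRingEnd ℂ) (χ j y)) * h2
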